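/- If the step sizes a_1, ..., a_n of a Rademacher sum X = Σ_{i=1}^n ε_i a_i all satisfy a_i ≥ c for a constant c > 0, then Q_{2c}(X) ≤ binom(n, ⌊n/2⌋)·2^{-n}, where Q_r is the Lévy concentration function. -/

import Mathlib

open MeasureTheory ProbabilityTheory Filter ENNReal

/-- The Lévy concentration function `Q_r(X) = sup_x P(x < X ≤ x + r)`. -/
noncomputable def Qc {Ω : Type*} [MeasurableSpace Ω] (μ : Measure Ω) (X : Ω → ℝ) (r : ℝ) : ℝ≥0∞ :=
  ⨆ x : ℝ, μ {ω | x < X ω ∧ X ω ≤ x + r}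


/-- The Rademacher distribution on ℝ: ±1 with probability 1/2 each. -/
noncomputable def radMeasure : Measure ℝ :=
  (1/2 : ℝ≥0∞) • Measure.dirac 1 + (1/2 : ℝ≥0∞) • Measure.dirac (-1)

lemma radMeasure_pm {v : ℝ} (hv : v = 1 ∨ v = -1) : radMeasure {v} = 1/2 := by
  rcases hv with h | h <;> subst h <;>
    simp [radMeasure, Measure.dirac_apply, Set.indicator, show (-1 : ℝ) ≠ 1 by norm_num,
      show (1 : ℝ) ≠ -1 by norm_num]

lemma radMeasure_compl : radMeasure ({1, -1} : Set ℝ)ᶜ = 0 := by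
  simp [radMeasure, Measure.dirac_apply, Set.indicator]

theorem stmt16 {Ω : Type*} [MeasurableSpace Ω] (μ : Measure Ω) [IsProbabilityMeasure μ]
    (ε : ℕ → Ω → ℝ) (hmeas : ∀ i, Measurable (ε i))
    (hdist : ∀ i, Measure.map (ε i) μ = radMeasure)
    (hindep : iIndepFun ε μ)
    (n : ℕ) (a : ℕ → ℝ) (c : ℝ) (hc : 0 < c) (ha : ∀ i ∈ Finset.range n, c ≤ a i) :
    Qc μ (fun ω => ∑ i ∈ Finset.range n, ε i ω * a i) (2 * c) ≤
      (n.choose (n / 2) : ℝ≥0∞) / 2 ^ n := by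
  classical
  apply iSup_le
  intro x
  -- sign pattern associated to `S : Finset (Fin n)`
  set sg : Finset (Fin n) → ℕ → ℝ :=
    fun S i => if h : i < n then (if (⟨i, h⟩ : Fin n) ∈ S then 1 else -1) else 1 with hsg
  set f : Finset (Fin n) → ℝ := fun S => ∑ i ∈ Finset.range n, sg S i * a i with hf
  set A : Finset (Fin n) → Set Ω := fun S => ⋂ i ∈ Finset.range n, ε i ⁻¹' {sg S i} with hA
  set E : Set Ω := {ω | x < ∑ i ∈ Finset.range n, ε i ω * a i ∧
      ∑ i ∈ Finset.range n, ε i ω * a i ≤ x + 2 * c} with hE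
  set N : Set Ω := ⋃ i ∈ Finset.range n, ε i ⁻¹' ({1, -1} : Set ℝ)ᶜ with hN
  have hpre : ∀ i (s : Set ℝ), MeasurableSet s → μ (ε i ⁻¹' s) = radMeasure s := fun i s hs => by
    rw [← hdist i, Measure.map_apply (hmeas i) hs]
  have hsgpm : ∀ S i, sg S i = 1 ∨ sg S i = -1 := by
    intro S i
    simp only [hsg]
    split_ifs <;> simp
  -- measure of each atom
  have hAmeas : ∀ S, μ (A S) = (1/2 : ℝ≥0∞) ^ n := by
    intro S
    rw [hA]
    rw [hindep.meas_biInter (fun i _ => ⟨{sg S i}, measurableSet_singleton _, rfl⟩)]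
    rw [Finset.prod_congr rfl fun i _ =>
      (hpre i _ (measurableSet_singleton _)).trans (radMeasure_pm (hsgpm S i))]
    rw [Finset.prod_const, Finset.card_range]
  -- the bad set is null
  have hpm_meas : MeasurableSet ({1, -1} : Set ℝ) :=
    (measurableSet_singleton 1).union (measurableSet_singleton (-1))
  have hNnull : μ N = 0 := by
    refine le_antisymm (le_trans (measure_biUnion_finset_le _ _) (le_of_eq ?_)) zero_le
    refine Finset.sum_eq_zero fun i _ => ?_
    rw [hpre i _ hpm_meas.compl, radMeasure_compl]
  -- value of the sum on each atom
  have hX : ∀ S, ∀ ω ∈ A S, ∑ i ∈ Finset.range n, ε i ω * a i = f S := by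
    intro S ω hω
    refine Finset.sum_congr rfl fun i hi => ?_
    have := Set.mem_iInter₂.1 hω i hi
    simp only [Set.mem_preimage, Set.mem_singleton_iff] at this
    rw [this]
  -- good patterns
  set G : Finset (Finset (Fin n)) :=
    Finset.univ.filter (fun S => x < f S ∧ f S ≤ x + 2 * c) with hG
  -- antichain via the gap argument
  have hanti : IsAntichain (· ⊆ ·) (G : Set (Finset (Fin n))) := by
    intro S hS T hT hne hsub
    simp only [hG, Finset.coe_filter, Set.mem_setOf_eq, Finset.mem_univ, true_and] at hS hT
    obtain ⟨i₀, hi₀T, hi₀S⟩ := Finset.exists_of_ssubset (lt_of_le_of_ne hsub hne)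
    have hgap : 2 * c ≤ f T - f S := by
      have : f T - f S = ∑ i ∈ Finset.range n, (sg T i - sg S i) * a i := by
        rw [hf, ← Finset.sum_sub_distrib]
        exact Finset.sum_congr rfl fun i _ => by ring
      rw [this]
      have hterm : ∀ i ∈ Finset.range n,
          (if i = (i₀ : ℕ) then 2 * c else 0) ≤ (sg T i - sg S i) * a i := by
        intro i hi
        have hin : i < n := Finset.mem_range.1 hi
        have hai : c ≤ a i := ha i hi
        by_cases hii : i = (i₀ : ℕ)
        · have hieq : (⟨i, hin⟩ : Fin n) = i₀ := Fin.ext hii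
          have h1 : sg T i = 1 := by
            simp only [hsg, dif_pos hin, hieq, if_pos hi₀T]
          have h2 : sg S i = -1 := by
            simp only [hsg, dif_pos hin, hieq, if_neg hi₀S]
          rw [if_pos hii, h1, h2]
          nlinarith
        · rw [if_neg hii]
          have : sg S i ≤ sg T i := by
            simp only [hsg, dif_pos hin]
            by_cases hmem : (⟨i, hin⟩ : Fin n) ∈ S
            · rw [if_pos hmem, if_pos (hsub hmem)]
            · rw [if_neg hmem]
              rcases hsgpm T i with h | h <;> simp only [hsg, dif_pos hin] at h <;>
                rw [h] <;> norm_num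
          nlinarith
      calc (2 : ℝ) * c = ∑ i ∈ Finset.range n, (if i = (i₀ : ℕ) then 2 * c else 0) := by
            rw [Finset.sum_ite_eq' (Finset.range n) (i₀ : ℕ) (fun _ => 2 * c),
              if_pos (Finset.mem_range.2 i₀.isLt)]
        _ ≤ _ := Finset.sum_le_sum hterm
    linarith [hS.1, hT.2]
  have hcard : G.card ≤ n.choose (n / 2) := by
    simpa using IsAntichain.sperner hanti
  -- E is covered by the good atoms and the null set
  have hcover : E ⊆ (⋃ S ∈ (Finset.univ : Finset (Finset (Fin n))), (E ∩ A S)) ∪ N := by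
    intro ω hω
    by_cases hωN : ω ∈ N
    · exact Or.inr hωN
    · left
      have hval : ∀ i ∈ Finset.range n, ε i ω = 1 ∨ ε i ω = -1 := by
        intro i hi
        by_contra h
        push_neg at h
        exact hωN (Set.mem_biUnion hi (by simp [h.1, h.2]))
      set S : Finset (Fin n) := Finset.univ.filter (fun i : Fin n => ε (i : ℕ) ω = 1) with hSdef
      refine Set.mem_biUnion (Finset.mem_univ S) ⟨hω, ?_⟩
      refine Set.mem_iInter₂.2 fun i hi => ?_
      have hin : i < n := Finset.mem_range.1 hi
      simp only [Set.mem_preimage, Set.mem_singleton_iff, hsg, dif_pos hin]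
      rcases hval i hi with h1 | h1
      · rw [if_pos]
        · exact h1
        · simp [hSdef, h1]
      · rw [if_neg]
        · exact h1
        · simp only [hSdef, Finset.mem_filter, Finset.mem_univ, true_and, h1]
          norm_num
  -- put everything together
  calc μ E ≤ μ ((⋃ S ∈ (Finset.univ : Finset (Finset (Fin n))), (E ∩ A S)) ∪ N) :=
        measure_mono hcover
    _ ≤ μ (⋃ S ∈ (Finset.univ : Finset (Finset (Fin n))), (E ∩ A S)) + μ N := measure_union_le _ _
    _ = μ (⋃ S ∈ (Finset.univ : Finset (Finset (Fin n))), (E ∩ A S)) := by rw [hNnull, add_zero]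
    _ ≤ ∑ S ∈ (Finset.univ : Finset (Finset (Fin n))), μ (E ∩ A S) :=
        measure_biUnion_finset_le _ _
    _ ≤ ∑ S ∈ (Finset.univ : Finset (Finset (Fin n))),
          (if S ∈ G then (1/2 : ℝ≥0∞) ^ n else 0) := by
        refine Finset.sum_le_sum fun S _ => ?_
        by_cases hSG : S ∈ G
        · rw [if_pos hSG]
          exact (measure_mono Set.inter_subset_right).trans (hAmeas S).le
        · rw [if_neg hSG]
          have : E ∩ A S = ∅ := by
            ext ω
            simp only [Set.mem_inter_iff, Set.mem_empty_iff_false, iff_false, not_and]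
            intro hωE hωA
            have := hX S ω hωA
            apply hSG
            simp only [hG, Finset.mem_filter, Finset.mem_univ, true_and]
            rw [hE] at hωE
            exact ⟨this ▸ hωE.1, this ▸ hωE.2⟩
          rw [this, measure_empty]
    _ = G.card * (1/2 : ℝ≥0∞) ^ n := by
        rw [Finset.sum_ite_mem, Finset.univ_inter, Finset.sum_const, nsmul_eq_mul]
    _ ≤ (n.choose (n / 2) : ℝ≥0∞) * (1/2 : ℝ≥0∞) ^ n := by
        exact mul_le_mul_left (by exact_mod_cast hcard) _
    _ = (n.choose (n / 2) : ℝ≥0∞) / 2 ^ n := by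
        rw [one_div, div_eq_mul_inv, ENNReal.inv_pow]
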